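/- Let k ≥ 1, 0 ≤ n ≤ k+1, and let D be an abelian group. Suppose d assigns to every ordered pair (S, S') of distinct close size-n subsets of [0,k] an element d(S,S') ∈ D, such that d(S',S) = −d(S,S') for all close pairs, and d(S,S') + d(S',S'') = d(S,S'') whenever S, S', S'' are pairwise distinct and pairwise close size-n subsets. Then there exists a function f from the set of all size-n subsets of [0,k] to D such that d(S,S') = f(S') − f(S) for every close pair (S,S'). (Equivalently: every D-valued simplicial 1-cocycle on the simplicial complex X(n,k), whose vertices are size-n subsets of [0,k], whose edges are close pairs, and whose 2-simplices are pairwise close triples, is a coboundary; this expresses the vanishing of H^1(X(n,k), D), which follows from the simple connectivity of |X(n,k)| proved in the paper.) -/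

import Mathlib

/-!
Encode a size-`n` subset of `[0,k]` by its increasing enumeration `a : Fin n → ℤ`; two subsets
are close exactly when their enumerations differ by at most one in each coordinate. The
coordinatewise minimum `a ⊓ b` of two near tuples is near both, so the cocycle condition on the
triangle `a, a ⊓ b, b` reduces everything to comparable pairs `b < a`. The potential of `a` sums
the cocycle along the path from `a` down to the least tuple `(0, 1, …, n-1)` that lowers, at each
step, every coordinate that can be lowered. For near `b < a` the first step `lower a` lies below
`b`, and the cocycle condition on `lower a, b, a` gives the claim by induction on `excess a`.
-/

/-- Two finite sets of integers are *close* if there is a bijection `g : S → S'`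
with `g i ∈ {i-1, i, i+1}` for every `i ∈ S`. -/
def IsClose (S S' : Finset ℤ) : Prop :=
  ∃ g : ℤ → ℤ, Set.BijOn g ↑S ↑S' ∧ ∀ i ∈ S, g i = i - 1 ∨ g i = i ∨ g i = i + 1

open Finset

theorem Finset.orderEmbOfFin_le_iff {α : Type*} [LinearOrder α] {n : ℕ} (s : Finset α)
    (h : #s = n) (i : Fin n) (x : α) :
    s.orderEmbOfFin h i ≤ x ↔ (i : ℕ) < #{y ∈ s | y ≤ x} := by
  constructor
  · intro hx
    calc (i : ℕ) < #((Iic i).map (s.orderEmbOfFin h).toEmbedding) := by simp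
      _ ≤ #{y ∈ s | y ≤ x} := card_le_card fun y hy => by
        obtain ⟨j, hj, rfl⟩ := mem_map.1 hy
        exact mem_filter.2 ⟨s.orderEmbOfFin_mem h j,
          ((s.orderEmbOfFin h).monotone (mem_Iic.1 hj)).trans hx⟩
  · intro hcard
    by_contra! hx
    refine hcard.not_ge ?_
    calc #{y ∈ s | y ≤ x} ≤ #((Iio i).map (s.orderEmbOfFin h).toEmbedding) :=
          card_le_card fun y hy => by
            obtain ⟨hys, hyx⟩ := mem_filter.1 hy
            obtain ⟨j, rfl⟩ : y ∈ Set.range (s.orderEmbOfFin h) := by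
              rwa [range_orderEmbOfFin]
            exact mem_map_of_mem _ (mem_Iio.2 ((s.orderEmbOfFin h).lt_iff_lt.1 (hyx.trans_lt hx)))
      _ = i := by simp

structure IsCocycleOn {X D : Type*} [AddCommGroup D] (V : Set X) (adj : X → X → Prop)
    (e : X → X → D) : Prop where
  skew : ∀ a ∈ V, ∀ b ∈ V, a ≠ b → adj a b → e b a = -e a b
  add : ∀ a ∈ V, ∀ b ∈ V, ∀ c ∈ V, a ≠ b → b ≠ c → a ≠ c →
    adj a b → adj b c → adj a c → e a b + e b c = e a c

theorem IsCocycleOn.comap {X Y D : Type*} [AddCommGroup D] {V : Set X} {W : Set Y}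
    {adj : X → X → Prop} {adj' : Y → Y → Prop} {e : X → X → D} (h : IsCocycleOn V adj e)
    {φ : Y → X} (hmaps : Set.MapsTo φ W V) (hinj : Set.InjOn φ W)
    (hadj : ∀ a ∈ W, ∀ b ∈ W, adj' a b → adj (φ a) (φ b)) :
    IsCocycleOn W adj' (fun a b => e (φ a) (φ b)) where
  skew a ha b hb hab hnear :=
    h.skew _ (hmaps ha) _ (hmaps hb) (hinj.ne ha hb hab) (hadj a ha b hb hnear)
  add a ha b hb c hc hab hbc hac h₁ h₂ h₃ :=
    h.add _ (hmaps ha) _ (hmaps hb) _ (hmaps hc) (hinj.ne ha hb hab) (hinj.ne hb hc hbc)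
      (hinj.ne ha hc hac) (hadj a ha b hb h₁) (hadj b hb c hc h₂) (hadj a ha c hc h₃)

namespace IncreasingTuple

variable {n : ℕ} {k : ℤ}

def IsNear (a b : Fin n → ℤ) : Prop := ∀ i, a i ≤ b i + 1 ∧ b i ≤ a i + 1

theorem IsNear.symm {a b : Fin n → ℤ} (h : IsNear a b) : IsNear b a := fun i => (h i).symm

def tuples (n : ℕ) (k : ℤ) : Set (Fin n → ℤ) := {a | StrictMono a ∧ ∀ i, 0 ≤ a i ∧ a i ≤ k}

theorem le_apply {a : Fin n → ℤ} (ha : a ∈ tuples n k) (i : Fin n) : (i : ℤ) ≤ a i := by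
  have hcard : #(Iic i) ≤ #(Icc 0 (a i)) :=
    card_le_card_of_injOn a (fun j hj => mem_Icc.2 ⟨(ha.2 j).1, ha.1.monotone (mem_Iic.1 hj)⟩)
      ha.1.injective.injOn
  rw [Fin.card_Iic, Int.card_Icc] at hcard
  omega

def lower (a : Fin n → ℤ) : Fin n → ℤ := fun i => if (i : ℤ) < a i then a i - 1 else a i

theorem lower_le (a : Fin n → ℤ) : lower a ≤ a := fun i => by
  simp only [lower]; split <;> omega

theorem isNear_lower (a : Fin n → ℤ) : IsNear (lower a) a := fun i => by
  simp only [lower]; split <;> omega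

theorem lower_mem {a : Fin n → ℤ} (ha : a ∈ tuples n k) : lower a ∈ tuples n k := by
  refine ⟨?_, fun i => ?_⟩
  · intro i j hij
    have := ha.1 hij; have := le_apply ha i; have := le_apply ha j
    have : (i : ℤ) < j := by exact_mod_cast hij
    simp only [lower]; split <;> split <;> omega
  · have := ha.2 i; have := le_apply ha i
    simp only [lower]; split <;> omega

theorem lower_le_of_le {a b : Fin n → ℤ} (hb : b ∈ tuples n k) (hba : b ≤ a) (hab : IsNear a b) :
    lower a ≤ b := fun i => by
  have := le_apply hb i; have : b i ≤ a i := hba i; have := hab i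
  simp only [lower]; split <;> omega

def excess (a : Fin n → ℤ) : ℕ := ∑ i, (a i - i).toNat

theorem excess_lt_excess {a b : Fin n → ℤ} (hba : b < a) (h : ∀ i, b i < a i → (i : ℤ) < a i) :
    excess b < excess a := by
  obtain ⟨hle, i, hi⟩ := Pi.lt_def.1 hba
  refine sum_lt_sum (fun j _ => by have : b j ≤ a j := hle j; omega) ⟨i, mem_univ i, ?_⟩
  have := h i hi; omega

theorem excess_lower_lt {a : Fin n → ℤ} (h : lower a ≠ a) : excess (lower a) < excess a :=
  excess_lt_excess (lt_of_le_of_ne (lower_le a) h) fun i => by simp only [lower]; split <;> omega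

variable {D : Type*} [AddCommGroup D]

def potential (e : (Fin n → ℤ) → (Fin n → ℤ) → D) (a : Fin n → ℤ) : D :=
  if lower a = a then 0 else potential e (lower a) + e (lower a) a
termination_by excess a
decreasing_by exact excess_lower_lt ‹_›

theorem potential_of_lower_ne (e : (Fin n → ℤ) → (Fin n → ℤ) → D) {a : Fin n → ℤ}
    (h : lower a ≠ a) : potential e a = potential e (lower a) + e (lower a) a := by
  rw [potential, if_neg h]

variable {e : (Fin n → ℤ) → (Fin n → ℤ) → D}

theorem eq_potential_sub_of_lt (he : IsCocycleOn (tuples n k) IsNear e)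
    {a b : Fin n → ℤ} (ha : a ∈ tuples n k) (hb : b ∈ tuples n k) (hba : b < a)
    (hab : IsNear a b) : e b a = potential e a - potential e b := by
  induction hw : excess a using Nat.strong_induction_on generalizing a b with
  | _ w ih =>
    have hlow : lower a ≤ b := lower_le_of_le hb hba.le hab
    have hne : lower a ≠ a := (lt_of_le_of_lt hlow hba).ne
    rw [potential_of_lower_ne e hne]
    rcases hlow.lt_or_eq with hlt | rfl
    · have hnear : IsNear (lower a) b := fun i => by
        have : lower a i ≤ b i := hlow i; have : b i ≤ a i := hba.le i
        have := isNear_lower a i; omega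
      have hstep := ih _ (hw ▸ excess_lt_excess hba fun i _ => by
        have := le_apply hb i; omega) hb (lower_mem ha) hlt hnear.symm rfl
      have htri := he.add _ (lower_mem ha) _ hb _ ha hlt.ne hba.ne hne hnear hab.symm
        (isNear_lower a)
      rw [← htri, hstep]; abel
    · abel

theorem inf_mem {a b : Fin n → ℤ} (ha : a ∈ tuples n k) (hb : b ∈ tuples n k) :
    a ⊓ b ∈ tuples n k :=
  ⟨fun _ _ hij => lt_min (min_lt_of_left_lt (ha.1 hij)) (min_lt_of_right_lt (hb.1 hij)),
    fun i => ⟨le_min (ha.2 i).1 (hb.2 i).1, min_le_of_left_le (ha.2 i).2⟩⟩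

theorem isNear_inf {a b : Fin n → ℤ} (h : IsNear a b) : IsNear a (a ⊓ b) := fun i => by
  have := h i; simp only [Pi.inf_apply]; omega

theorem eq_potential_sub (he : IsCocycleOn (tuples n k) IsNear e)
    {a b : Fin n → ℤ} (ha : a ∈ tuples n k) (hb : b ∈ tuples n k) (hab : a ≠ b)
    (hnear : IsNear a b) : e a b = potential e b - potential e a := by
  have hm := inf_mem ha hb
  have hma : IsNear a (a ⊓ b) := isNear_inf hnear
  have hmb : IsNear b (a ⊓ b) := inf_comm a b ▸ isNear_inf hnear.symm
  by_cases hle : a ≤ b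
  · exact eq_potential_sub_of_lt he hb ha (lt_of_le_of_ne hle hab) hnear.symm
  by_cases hge : b ≤ a
  · rw [he.skew _ hb _ ha hab.symm hnear.symm,
      eq_potential_sub_of_lt he ha hb (lt_of_le_of_ne hge hab.symm) hnear]
    abel
  have hlta : a ⊓ b < a := inf_lt_left.2 hle
  have hltb : a ⊓ b < b := inf_lt_right.2 hge
  rw [← he.add _ ha _ hm _ hb hlta.ne' hltb.ne hab hma hmb.symm hnear,
    he.skew _ hm _ ha hlta.ne hma.symm, eq_potential_sub_of_lt he ha hm hlta hma,
    eq_potential_sub_of_lt he hb hm hltb hmb]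
  abel

theorem isNear_orderEmbOfFin {S S' : Finset ℤ} (h : IsClose S S') (hS : #S = n)
    (hS' : #S' = n) : IsNear (S.orderEmbOfFin hS) (S'.orderEmbOfFin hS') := by
  obtain ⟨g, hbij, hstep⟩ := h
  intro i
  set a := S.orderEmbOfFin hS i
  set b := S'.orderEmbOfFin hS' i
  constructor
  · rw [S.orderEmbOfFin_le_iff]
    calc (i : ℕ) < #{y ∈ S' | y ≤ b} := (S'.orderEmbOfFin_le_iff hS' i b).1 le_rfl
      _ ≤ #{x ∈ S | x ≤ b + 1} := card_le_card_of_surjOn g fun y hy => by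
        obtain ⟨hyS', hyb⟩ := mem_filter.1 hy
        obtain ⟨x, hx, rfl⟩ := hbij.surjOn hyS'
        have := hstep x hx
        exact ⟨x, mem_filter.2 ⟨hx, by omega⟩, rfl⟩
  · rw [S'.orderEmbOfFin_le_iff]
    calc (i : ℕ) < #{x ∈ S | x ≤ a} := (S.orderEmbOfFin_le_iff hS i a).1 le_rfl
      _ ≤ #{y ∈ S' | y ≤ a + 1} := card_le_card_of_injOn g
          (fun x hx => by
            obtain ⟨hxS, hxa⟩ := mem_filter.1 hx
            have := hstep x hxS
            exact mem_filter.2 ⟨hbij.mapsTo hxS, by omega⟩)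
          (hbij.injOn.mono fun x hx => (mem_filter.1 hx).1)

theorem isClose_image_of_isNear {a b : Fin n → ℤ} (ha : a.Injective)
    (hb : b.Injective) (h : IsNear a b) : IsClose (univ.image a) (univ.image b) := by
  refine ⟨Function.extend a b id, ?_, ?_⟩
  · simp only [coe_image, coe_univ, Set.image_univ]
    refine ⟨?_, ?_, ?_⟩
    · rintro _ ⟨i, rfl⟩
      exact ⟨i, (ha.extend_apply b id i).symm⟩
    · rintro _ ⟨i, rfl⟩ _ ⟨j, rfl⟩ hij
      rw [ha.extend_apply, ha.extend_apply] at hij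
      rw [hb hij]
    · rintro _ ⟨i, rfl⟩
      exact ⟨a i, ⟨i, rfl⟩, ha.extend_apply b id i⟩
  · intro x hx
    obtain ⟨i, -, rfl⟩ := mem_image.1 hx
    have := h i
    rw [ha.extend_apply]
    omega

def ofFinset (n : ℕ) (S : Finset ℤ) : Fin n → ℤ :=
  if h : #S = n then S.orderEmbOfFin h else 0

theorem ofFinset_of_card {S : Finset ℤ} (h : #S = n) : ofFinset n S = S.orderEmbOfFin h :=
  dif_pos h

theorem image_ofFinset {S : Finset ℤ} (h : #S = n) : univ.image (ofFinset n S) = S := by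
  rw [ofFinset_of_card h, image_orderEmbOfFin_univ]

theorem ofFinset_image {a : Fin n → ℤ} (ha : StrictMono a) : ofFinset n (univ.image a) = a := by
  have hcard : #(univ.image a) = n := by rw [card_image_of_injective _ ha.injective, card_fin]
  rw [ofFinset_of_card hcard]
  exact (orderEmbOfFin_unique hcard (fun i => mem_image_of_mem a (mem_univ i)) ha).symm

theorem ofFinset_mem {S : Finset ℤ} (hS : S ⊆ Icc 0 k) (h : #S = n) :
    ofFinset n S ∈ tuples n k := by
  rw [ofFinset_of_card h]
  exact ⟨(S.orderEmbOfFin h).strictMono, fun i => mem_Icc.1 (hS (S.orderEmbOfFin_mem h i))⟩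

theorem image_mem {a : Fin n → ℤ} (ha : a ∈ tuples n k) :
    univ.image a ⊆ Icc 0 k ∧ #(univ.image a) = n :=
  ⟨fun _ hx => by obtain ⟨i, -, rfl⟩ := mem_image.1 hx; exact mem_Icc.2 (ha.2 i),
    by rw [card_image_of_injective _ ha.1.injective, card_fin]⟩

theorem isNear_ofFinset {S S' : Finset ℤ} (h : IsClose S S') (hS : #S = n) (hS' : #S' = n) :
    IsNear (ofFinset n S) (ofFinset n S') := by
  rw [ofFinset_of_card hS, ofFinset_of_card hS']
  exact isNear_orderEmbOfFin h hS hS'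

end IncreasingTuple

theorem stmt_5 (k : ℤ) (n : ℕ)
    (D : Type*) [AddCommGroup D]
    (d : Finset ℤ → Finset ℤ → D)
    (hskew : ∀ S S' : Finset ℤ, S ⊆ Finset.Icc 0 k → S' ⊆ Finset.Icc 0 k →
      S.card = n → S'.card = n → S ≠ S' → IsClose S S' → d S' S = - d S S')
    (hcocycle : ∀ S S' S'' : Finset ℤ,
      S ⊆ Finset.Icc 0 k → S' ⊆ Finset.Icc 0 k → S'' ⊆ Finset.Icc 0 k →
      S.card = n → S'.card = n → S''.card = n →
      S ≠ S' → S' ≠ S'' → S ≠ S'' →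
      IsClose S S' → IsClose S' S'' → IsClose S S'' →
      d S S' + d S' S'' = d S S'') :
    ∃ f : Finset ℤ → D, ∀ S S' : Finset ℤ,
      S ⊆ Finset.Icc 0 k → S' ⊆ Finset.Icc 0 k →
      S.card = n → S'.card = n → S ≠ S' → IsClose S S' →
      d S S' = f S' - f S := by
  open IncreasingTuple in
  have hd : IsCocycleOn {S | S ⊆ Icc 0 k ∧ #S = n} IsClose d :=
    ⟨fun S hS S' hS' => hskew S S' hS.1 hS'.1 hS.2 hS'.2,
      fun S hS S' hS' S'' hS'' => hcocycle S S' S'' hS.1 hS'.1 hS''.1 hS.2 hS'.2 hS''.2⟩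
  have he := hd.comap (W := tuples n k) (φ := fun a => univ.image a) (fun _ ha => image_mem ha)
    (Set.LeftInvOn.injOn (f₁' := ofFinset n) fun _ ha => ofFinset_image ha.1)
    fun a ha b hb => isClose_image_of_isNear ha.1.injective hb.1.injective
  refine ⟨fun S => potential (fun a b => d (univ.image a) (univ.image b)) (ofFinset n S), ?_⟩
  intro S S' hS hS' hc hc' hne hclose
  have hne' : ofFinset n S ≠ ofFinset n S' := fun h =>
    hne (by rw [← image_ofFinset hc, h, image_ofFinset hc'])
  have := eq_potential_sub he (ofFinset_mem hS hc) (ofFinset_mem hS' hc') hne'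
    (isNear_ofFinset hclose hc hc')
  simpa only [image_ofFinset hc, image_ofFinset hc'] using this
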